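/- Let X and Y be Banach spaces and T : X → Y a bounded linear operator. Then T is compact if and only if the symmetrized approximation numbers of T tend to zero: lim_{n→∞} τₙ(T) = 0. -/

import Mathlib

/-!
For any operator `S`, `δₙ(S) → 0` exactly when `S` maps the unit ball to a totally bounded set:
the span `G` of a finite `ε`-net of the image satisfies `‖Q_G ∘ S‖ ≤ ε`, and conversely
`‖Q_G ∘ S‖ < ε` puts the image within `ε` of a bounded piece of the finite-dimensional `G`,
which is compact. Since `J` is an isometry, `T(B_X)` is totally bounded iff `J(T(B_X))` is, and
in the complete space `Y` total boundedness of `T(B_X)` means compactness of its closure.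
-/

open NormedSpace Metric Filter Topology
open scoped ENNReal Pointwise

/-- The canonical quotient map `Z → Z ⧸ G` as a continuous linear map. -/
noncomputable def quotCLM {Z : Type*} [NormedAddCommGroup Z] [NormedSpace ℝ Z]
    (G : Submodule ℝ Z) : Z →L[ℝ] Z ⧸ G :=
  ⟨G.mkQ, continuous_quot_mk⟩

/-- The `n`-th Kolmogorov number: `δₙ(T) = inf {‖Q_G ∘ T‖ : G ⊆ Y, dim G ≤ n}`. -/
noncomputable def kolmogorovNumber {X Y : Type*} [NormedAddCommGroup X] [NormedSpace ℝ X]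
    [NormedAddCommGroup Y] [NormedSpace ℝ Y] (n : ℕ) (T : X →L[ℝ] Y) : ℝ :=
  sInf {c : ℝ | ∃ G : Submodule ℝ Y, FiniteDimensional ℝ G ∧
    Module.finrank ℝ G ≤ n ∧ c = ‖(quotCLM G).comp T‖}

lemma isCompact_closure_iff_totallyBounded {α : Type*} [UniformSpace α] [CompleteSpace α]
    {s : Set α} : IsCompact (closure s) ↔ TotallyBounded s := by
  rw [isCompact_iff_totallyBounded_isComplete, totallyBounded_closure]
  exact and_iff_left isClosed_closure.isComplete

lemma totallyBounded_of_forall_subset_thickening_isCompact {α : Type*} [PseudoMetricSpace α]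
    {s : Set α} (h : ∀ ε > 0, ∃ K, IsCompact K ∧ s ⊆ thickening ε K) : TotallyBounded s := by
  refine Metric.totallyBounded_iff.2 fun ε hε => ?_
  obtain ⟨K, hK, hsK⟩ := h (ε / 2) (half_pos hε)
  obtain ⟨t, ht, hKt⟩ := Metric.totallyBounded_iff.1 hK.totallyBounded (ε / 2) (half_pos hε)
  refine ⟨t, ht, ?_⟩
  rw [← thickening_eq_biUnion_ball] at hKt ⊢
  calc s ⊆ thickening (ε / 2) (thickening (ε / 2) t) :=
        hsK.trans (thickening_subset_of_subset _ hKt)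
    _ ⊆ thickening (ε / 2 + ε / 2) t := thickening_thickening_subset _ _ _
    _ = thickening ε t := by rw [add_halves]

lemma norm_eq_of_forall_apply_eq_dual {E : Type*} [NormedAddCommGroup E] [NormedSpace ℝ E]
    (y : E) (f : lp (fun _ : {g : StrongDual ℝ E // ‖g‖ ≤ 1} => ℝ) ∞)
    (hf : ∀ g, f g = g.1 y) : ‖f‖ = ‖y‖ := by
  refine le_antisymm (lp.norm_le_of_forall_le (norm_nonneg y) fun g => ?_) ?_
  · rw [hf]
    exact g.1.le_of_opNorm_le g.2 y |>.trans_eq (one_mul _)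
  · obtain ⟨g, hg, hgy⟩ := exists_dual_vector'' ℝ y
    calc ‖y‖ = ‖f ⟨g, hg⟩‖ := by rw [hf, hgy]; simp
      _ ≤ ‖f‖ := lp.norm_apply_le_norm ENNReal.top_ne_zero f _

section

variable {W Z : Type*} [NormedAddCommGroup W] [NormedSpace ℝ W]
  [NormedAddCommGroup Z] [NormedSpace ℝ Z]

lemma norm_quotCLM_apply (G : Submodule ℝ Z) (z : Z) : ‖quotCLM G z‖ = infDist z G :=
  QuotientAddGroup.norm_mk z

lemma infDist_le_norm_quotCLM_comp (G : Submodule ℝ Z) (S : W →L[ℝ] Z) {x : W}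
    (hx : ‖x‖ ≤ 1) : infDist (S x) G ≤ ‖(quotCLM G).comp S‖ := by
  rw [← norm_quotCLM_apply]
  exact ((quotCLM G).comp S).le_of_opNorm_le le_rfl x |>.trans
    (mul_le_of_le_one_right (norm_nonneg _) hx)

lemma norm_quotCLM_comp_le_of_forall_infDist_le (G : Submodule ℝ Z) (S : W →L[ℝ] Z) {ε : ℝ}
    (hε : 0 ≤ ε) (h : ∀ x : W, ‖x‖ ≤ 1 → infDist (S x) G ≤ ε) :
    ‖(quotCLM G).comp S‖ ≤ ε :=
  ContinuousLinearMap.opNorm_le_of_unit_norm hε fun x hx => by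
    rw [ContinuousLinearMap.comp_apply, norm_quotCLM_apply]
    exact h x hx.le

lemma bddBelow_kolmogorovSet (n : ℕ) (S : W →L[ℝ] Z) :
    BddBelow {c : ℝ | ∃ G : Submodule ℝ Z, FiniteDimensional ℝ G ∧
      Module.finrank ℝ G ≤ n ∧ c = ‖(quotCLM G).comp S‖} :=
  ⟨0, by rintro c ⟨G, -, -, rfl⟩; positivity⟩

lemma kolmogorovNumber_nonneg (n : ℕ) (S : W →L[ℝ] Z) : 0 ≤ kolmogorovNumber n S :=
  Real.sInf_nonneg <| by rintro c ⟨G, -, -, rfl⟩; positivity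

lemma kolmogorovNumber_le (S : W →L[ℝ] Z) (G : Submodule ℝ Z) [FiniteDimensional ℝ G]
    {n : ℕ} (hn : Module.finrank ℝ G ≤ n) : kolmogorovNumber n S ≤ ‖(quotCLM G).comp S‖ :=
  csInf_le (bddBelow_kolmogorovSet n S) ⟨G, inferInstance, hn, rfl⟩

lemma exists_norm_quotCLM_comp_lt_of_kolmogorovNumber_lt {n : ℕ} {S : W →L[ℝ] Z} {ε : ℝ}
    (h : kolmogorovNumber n S < ε) :
    ∃ G : Submodule ℝ Z, FiniteDimensional ℝ G ∧ ‖(quotCLM G).comp S‖ < ε := by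
  unfold kolmogorovNumber at h
  obtain ⟨_, ⟨G, hG, -, rfl⟩, hlt⟩ :=
    exists_lt_of_csInf_lt (by exact ⟨_, ⊥, inferInstance, by simp, rfl⟩) h
  exact ⟨G, hG, hlt⟩

lemma tendsto_kolmogorovNumber_of_totallyBounded {S : W →L[ℝ] Z}
    (h : TotallyBounded (S '' closedBall 0 1)) :
    Tendsto (fun n => kolmogorovNumber n S) atTop (𝓝 0) := by
  refine tendsto_order.2 ⟨fun a ha => .of_forall fun n =>
    ha.trans_le (kolmogorovNumber_nonneg n S), fun ε hε => ?_⟩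
  obtain ⟨t, ht, hSt⟩ := Metric.totallyBounded_iff.1 h (ε / 2) (half_pos hε)
  let G := Submodule.span ℝ t
  have : FiniteDimensional ℝ G := FiniteDimensional.span_of_finite ℝ ht
  have hG : ‖(quotCLM G).comp S‖ ≤ ε / 2 := by
    refine norm_quotCLM_comp_le_of_forall_infDist_le G S (half_pos hε).le fun x hx => ?_
    obtain ⟨y, hyt, hxy⟩ := Set.mem_iUnion₂.1 (hSt ⟨x, mem_closedBall_zero_iff.2 hx, rfl⟩)
    exact (infDist_le_dist_of_mem (Submodule.subset_span hyt)).trans (mem_ball.1 hxy).le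
  filter_upwards [eventually_ge_atTop (Module.finrank ℝ G)] with n hn
  exact (kolmogorovNumber_le S G hn).trans_lt (hG.trans_lt (half_lt_self hε))

lemma totallyBounded_of_tendsto_kolmogorovNumber {S : W →L[ℝ] Z}
    (h : Tendsto (fun n => kolmogorovNumber n S) atTop (𝓝 0)) :
    TotallyBounded (S '' closedBall 0 1) := by
  refine totallyBounded_of_forall_subset_thickening_isCompact fun ε hε => ?_
  obtain ⟨n, hn⟩ := (h.eventually (gt_mem_nhds hε)).exists
  obtain ⟨G, hG, hSG⟩ := exists_norm_quotCLM_comp_lt_of_kolmogorovNumber_lt hn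
  -- a point of `G` within `ε` of `S x` has norm at most `‖S‖ + ε`
  refine ⟨(↑) '' closedBall (0 : G) (‖S‖ + ε),
    (isCompact_closedBall _ _).image continuous_subtype_val, ?_⟩
  rintro _ ⟨x, hx, rfl⟩
  rw [mem_closedBall_zero_iff] at hx
  obtain ⟨g, hgG, hxg⟩ := (infDist_lt_iff ⟨0, G.zero_mem⟩).1
    ((infDist_le_norm_quotCLM_comp G S hx).trans_lt hSG)
  refine mem_thickening_iff.2 ⟨g, ⟨⟨g, hgG⟩, ?_, rfl⟩, hxg⟩
  rw [mem_closedBall_zero_iff, Submodule.coe_norm]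
  calc ‖g‖ ≤ ‖S x‖ + ‖S x - g‖ := norm_le_norm_add_norm_sub _ _
    _ ≤ ‖S‖ + ε := by
      gcongr
      · exact S.le_of_opNorm_le_of_le le_rfl hx |>.trans_eq (mul_one _)
      · exact (dist_eq_norm (S x) g).symm.trans_lt hxg |>.le

theorem tendsto_kolmogorovNumber_iff_totallyBounded (S : W →L[ℝ] Z) :
    Tendsto (fun n => kolmogorovNumber n S) atTop (𝓝 0) ↔
      TotallyBounded (S '' closedBall 0 1) :=
  ⟨totallyBounded_of_tendsto_kolmogorovNumber, tendsto_kolmogorovNumber_of_totallyBounded⟩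

end

variable {X Y : Type*} [NormedAddCommGroup X] [NormedSpace ℝ X] [CompleteSpace X]
  [NormedAddCommGroup Y] [NormedSpace ℝ Y] [CompleteSpace Y]

/-- Refined Schauder theorem, part 1: `T` is compact iff its symmetrized approximation
numbers `τₙ(T) = δₙ(J_Y ∘ T)` tend to zero, where `J_Y : Y → ℓ^∞(B_{Y*})` is the
canonical isometric embedding `(J_Y y)(y*) = y*(y)`. -/
theorem isCompact_iff_tendsto_symmetrizedApproxNumber (T : X →L[ℝ] Y)
    (J : Y →L[ℝ] lp (fun _ : {g : StrongDual ℝ Y // ‖g‖ ≤ 1} => ℝ) ∞)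
    (hJ : ∀ (y : Y) (g : {g : StrongDual ℝ Y // ‖g‖ ≤ 1}), J y g = g.1 y) :
    IsCompact (closure (T '' closedBall 0 1)) ↔
      Tendsto (fun n : ℕ => kolmogorovNumber n (J.comp T)) atTop (nhds 0) := by
  have hJiso : Isometry J :=
    AddMonoidHomClass.isometry_of_norm J fun y => norm_eq_of_forall_apply_eq_dual y (J y) (hJ y)
  rw [tendsto_kolmogorovNumber_iff_totallyBounded, ContinuousLinearMap.coe_comp, Set.image_comp,
    totallyBounded_image_iff hJiso.isUniformInducing, isCompact_closure_iff_totallyBounded]
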